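/- The lifted Hamming code C_{(m,r)} over F_{q^r} is (r,q)-completely transitive: for any two vectors v, w ∈ F_{q^r}^n at the same distance from C_{(m,r)}, there exists an automorphism φ ∈ Aut_{(r,q)}(C_{(m,r)}) such that w and φ(v) lie in the same coset of C_{(m,r)}. -/

import Mathlib

/-- Distance from a vector to a code (minimum Hamming distance to a codeword). -/
noncomputable def distToCode {n : ℕ} {K : Type*} [DecidableEq K] (C : Set (Fin n → K)) (v : Fin n → K) : ℕ :=
  sInf {d : ℕ | ∃ c ∈ C, hammingDist v c = d}

/-- `f` acts as a monomial matrix over `K`. -/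
def IsMonomialMap {n : ℕ} {K : Type*} [Field K] (f : AddAut (Fin n → K)) : Prop :=
  ∃ (σ : Equiv.Perm (Fin n)) (d : Fin n → Kˣ), ∀ (x : Fin n → K) (j : Fin n),
    f x j = (d j : K) * x (σ j)

/-- `f` acts coordinatewise as an `F`-vector space automorphism of `K`. -/
def IsSemilinearMap (F : Type*) {n : ℕ} {K : Type*} [Field F] [Field K] [Algebra F K]
    (f : AddAut (Fin n → K)) : Prop :=
  ∃ g : K ≃ₗ[F] K, ∀ (x : Fin n → K) (j : Fin n), f x j = g (x j)

/-!
The distance of `v` from the code is the `F`-rank of its syndrome `H v ∈ K^m`. A vector of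
weight `t` has its syndrome in the `F`-span of its `t` nonzero entries; conversely, since every
nonzero vector of `F^m` is a multiple of a column of `H`, a syndrome of rank `t` is a sum of `t`
syndromes of weight-one vectors.

Viewing syndromes `S, S'` of equal rank as `F`-linear maps `F^m → K`, we get `S' = g ∘ S ∘ ψ` with
`g ∈ GL_F(K)` and `ψ ∈ GL(F^m)`. The factor `g` is realised by applying `g` coordinatewise. For
`ψ`, the matrix `B = ψᵀ` permutes the columns of `H` up to scalars (again because they represent
all points of the projective space), so `B H = H P` for a monomial matrix `P`.
-/

open Matrix Module Submodule

section LinearAlgebra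

variable {F V W : Type*} [Field F] [AddCommGroup V] [Module F V] [AddCommGroup W] [Module F W]

theorem LinearMap.exists_linearEquiv_comp_eq_of_ker_eq [FiniteDimensional F W]
    (A A' : V →ₗ[F] W) (h : ker A = ker A') : ∃ g : W ≃ₗ[F] W, g.toLinearMap ∘ₗ A = A' := by
  let e : range A ≃ₗ[F] range A' :=
    A.quotKerEquivRange.symm ≪≫ₗ quotEquivOfEq _ _ h ≪≫ₗ A'.quotKerEquivRange
  obtain ⟨g, hg⟩ := exists_linearEquiv_restrict_eq e
  refine ⟨g, LinearMap.ext fun v => ?_⟩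
  simpa [e, LinearMap.quotKerEquivRange_symm_apply_image] using
    (hg ⟨A v, mem_range_self A v⟩).symm

theorem Submodule.exists_linearEquiv_comap_eq [FiniteDimensional F V] {P P' : Submodule F V}
    (h : finrank F P = finrank F P') : ∃ g : V ≃ₗ[F] V, P'.comap g.toLinearMap = P := by
  obtain ⟨g, hg⟩ := exists_linearEquiv_restrict_eq (LinearEquiv.ofFinrankEq P P' h)
  refine ⟨g, le_antisymm (fun v hv => ?_) (fun v hv => ?_)⟩
  · obtain ⟨x, hx⟩ := (LinearEquiv.ofFinrankEq P P' h).surjective ⟨g v, hv⟩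
    have : g v = g x := by rw [← hg x, hx]
    exact g.injective this ▸ x.2
  · exact (mem_comap.2 (hg ⟨v, hv⟩ ▸ (LinearEquiv.ofFinrankEq P P' h ⟨v, hv⟩).2))

theorem LinearMap.exists_linearEquiv_comp_comp_eq_of_finrank_range_eq [FiniteDimensional F V]
    [FiniteDimensional F W] (L L' : V →ₗ[F] W) (h : finrank F (range L) = finrank F (range L')) :
    ∃ (ψ : V ≃ₗ[F] V) (g : W ≃ₗ[F] W), g.toLinearMap ∘ₗ L ∘ₗ ψ.toLinearMap = L' := by
  have hker : finrank F (ker L') = finrank F (ker L) := by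
    have := L.finrank_range_add_finrank_ker
    have := L'.finrank_range_add_finrank_ker
    omega
  obtain ⟨ψ, hψ⟩ := exists_linearEquiv_comap_eq hker
  obtain ⟨g, hg⟩ := exists_linearEquiv_comp_eq_of_ker_eq (L ∘ₗ ψ.toLinearMap) L'
    (by rw [ker_comp, hψ])
  exact ⟨ψ, g, hg⟩

end LinearAlgebra

theorem exists_isUnit_map_mulVec_comp_eq {F K m : Type*} [Field F] [Field K] [Algebra F K]
    [FiniteDimensional F K] [Fintype m] [DecidableEq m] {s s' : m → K}
    (h : Set.finrank F (Set.range s) = Set.finrank F (Set.range s')) :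
    ∃ B : Matrix m m F, IsUnit B ∧ ∃ g : K ≃ₗ[F] K, B.map (algebraMap F K) *ᵥ (g ∘ s) = s' := by
  obtain ⟨ψ, g, hg⟩ := LinearMap.exists_linearEquiv_comp_comp_eq_of_finrank_range_eq
    (Fintype.linearCombination F s) (Fintype.linearCombination F s')
    (by rwa [Fintype.range_linearCombination, Fintype.range_linearCombination])
  refine ⟨(LinearMap.toMatrix' ψ.toLinearMap)ᵀ, ?_, g, funext fun i => ?_⟩
  · exact (isUnit_transpose _).2
      (LinearMap.isUnit_toMatrix'_iff.2 ((Module.End.isUnit_iff _).2 ψ.bijective))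
  · have hi := LinearMap.congr_fun hg (Pi.single i 1)
    simp only [LinearMap.comp_apply, LinearEquiv.coe_coe, Fintype.linearCombination_apply,
      map_sum, map_smul] at hi
    simpa [mulVec, dotProduct, Pi.single_apply, Algebra.smul_def] using hi

theorem hammingNorm_add_le {ι : Type*} {β : ι → Type*} [Fintype ι] [∀ i, AddZeroClass (β i)]
    [∀ i, DecidableEq (β i)] (x y : ∀ i, β i) :
    hammingNorm (x + y) ≤ hammingNorm x + hammingNorm y := by
  classical
  refine (Finset.card_le_card fun i => ?_).trans (Finset.card_union_le _ _)
  simp only [Finset.mem_filter, Finset.mem_union, Finset.mem_univ, true_and, Pi.add_apply]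
  contrapose!
  rintro ⟨hx, hy⟩
  simp [hx, hy]

section Weight

variable {F K ι m : Type*} [Field F] [Field K] [Algebra F K] [DecidableEq K]
  [Fintype ι] (H : Matrix m ι F)

theorem finrank_range_map_mulVec_le_hammingNorm (u : ι → K) :
    Set.finrank F (Set.range (H.map (algebraMap F K) *ᵥ u)) ≤ hammingNorm u := by
  let support := {j // u j ≠ 0}
  have hspan : span F (Set.range (H.map (algebraMap F K) *ᵥ u)) ≤
      span F (Set.range fun j : support => u j) := by
    refine span_le.2 (Set.range_subset_iff.2 fun i => sum_mem fun j _ => ?_)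
    by_cases hj : u j = 0
    · simp [hj]
    · simpa [← Algebra.smul_def] using
        smul_mem _ (H i j) (subset_span (Set.mem_range_self (⟨j, hj⟩ : support)))
  have : FiniteDimensional F (span F (Set.range fun j : support => u j)) :=
    FiniteDimensional.span_of_finite F (Set.finite_range _)
  calc Set.finrank F (Set.range (H.map (algebraMap F K) *ᵥ u))
      ≤ Set.finrank F (Set.range fun j : support => u j) := finrank_mono hspan
    _ ≤ Fintype.card support := finrank_range_le_card _
    _ = hammingNorm u := by rw [Fintype.card_subtype]; rfl

variable (hcover : ∀ y : m → F, y ≠ 0 → ∃ (j : ι) (c : Fˣ), c • Hᵀ j = y)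
include hcover

theorem exists_hammingNorm_le_one_map_mulVec_eq (y : m → F) (b : K) :
    ∃ u : ι → K, hammingNorm u ≤ 1 ∧ H.map (algebraMap F K) *ᵥ u = fun i => y i • b := by
  classical
  by_cases hy : y = 0
  · exact ⟨0, by simp, by ext; simp [hy]⟩
  obtain ⟨j, c, rfl⟩ := hcover y hy
  refine ⟨Pi.single j ((c : F) • b), ?_, funext fun i => ?_⟩
  · refine Finset.card_le_one.2 fun a ha a' ha' => ?_
    simp only [Finset.mem_filter, Finset.mem_univ, true_and] at ha ha'
    have eq_j : ∀ a, (Pi.single j ((c : F) • b) : ι → K) a ≠ 0 → a = j := fun a ha =>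
      by_contra fun h => ha (Pi.single_eq_of_ne h _)
    rw [eq_j a ha, eq_j a' ha']
  · simp [mulVec_single, Algebra.smul_def, Units.smul_def, mul_comm, mul_left_comm]

theorem exists_hammingNorm_le_finrank_map_mulVec_eq [Fintype m] (s : m → K) :
    ∃ u : ι → K, hammingNorm u ≤ Set.finrank F (Set.range s) ∧
      H.map (algebraMap F K) *ᵥ u = s := by
  have : FiniteDimensional F (span F (Set.range s)) :=
    FiniteDimensional.span_of_finite F (Set.finite_range s)
  let b := finBasis F (span F (Set.range s))
  let coord (i : m) := b.repr ⟨s i, subset_span ⟨i, rfl⟩⟩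
  have hs : ∀ i, ∑ k, coord i k • (b k : K) = s i := fun i => by
    simpa only [coord, coe_sum, coe_smul] using
      congrArg Subtype.val (b.sum_repr ⟨s i, subset_span ⟨i, rfl⟩⟩)
  choose u hu hHu using fun k =>
    exists_hammingNorm_le_one_map_mulVec_eq H hcover (fun i => coord i k) (b k : K)
  refine ⟨∑ k, u k, ?_, ?_⟩
  · calc hammingNorm (∑ k, u k) ≤ ∑ k, hammingNorm (u k) :=
          Finset.le_sum_of_subadditive _ hammingNorm_zero.le hammingNorm_add_le _ _
      _ ≤ ∑ _k, 1 := Finset.sum_le_sum fun k _ => hu k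
      _ = Set.finrank F (Set.range s) := by simp [Set.finrank]
  · ext i
    simp only [mulVec_sum, hHu, Finset.sum_apply, hs]

end Weight

theorem distToCode_eq_finrank {F K : Type*} [Field F] [Field K] [Algebra F K] [DecidableEq K]
    {m : Type*} [Fintype m] {n : ℕ} (H : Matrix m (Fin n) F)
    (hcover : ∀ y : m → F, y ≠ 0 → ∃ (j : Fin n) (c : Fˣ), c • Hᵀ j = y) (v : Fin n → K) :
    distToCode {x | H.map (algebraMap F K) *ᵥ x = 0} v =
      Set.finrank F (Set.range (H.map (algebraMap F K) *ᵥ v)) := by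
  unfold distToCode
  refine le_antisymm ?_ (le_csInf ⟨_, Set.mem_ofPred.2 ⟨0, by simp, rfl⟩⟩ ?_)
  · obtain ⟨u, hu, hHu⟩ := exists_hammingNorm_le_finrank_map_mulVec_eq H hcover
      (H.map (algebraMap F K) *ᵥ v)
    refine (Nat.sInf_le (Set.mem_ofPred.2 ⟨v - u, ?_, rfl⟩)).trans ?_
    · rwa [hammingDist_comm, hammingDist_eq_hammingNorm, neg_sub, sub_add_cancel]
    · exact (mulVec_sub _ _ _).trans (by rw [hHu, sub_self])
  · rintro _ ⟨c, hc, rfl⟩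
    have hc : H.map (algebraMap F K) *ᵥ c = 0 := hc
    rw [hammingDist_comm, hammingDist_eq_hammingNorm, neg_add_eq_sub, ← sub_zero (_ *ᵥ v), ← hc,
      ← mulVec_sub]
    exact finrank_range_map_mulVec_le_hammingNorm H (v - c)

section Columns

variable {F ι m : Type*} [Field F] (H : Matrix m ι F) (hcols : ∀ j, Hᵀ j ≠ 0)
  (hind : ∀ j₁ j₂, j₁ ≠ j₂ → ∀ c : F, Hᵀ j₂ ≠ c • Hᵀ j₁)
include hcols hind

theorem units_smul_transpose_injective : Function.Injective fun p : ι × Fˣ => p.2 • Hᵀ p.1 := by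
  rintro ⟨j, c⟩ ⟨j', c'⟩ (h : c • Hᵀ j = c' • Hᵀ j')
  obtain rfl : j = j' := by
    by_contra hne
    exact hind j j' hne ((c'⁻¹ * c : Fˣ) : F)
      (by rw [← Units.smul_def, mul_smul, h, inv_smul_smul])
  exact Prod.ext rfl
    (Units.ext (smul_left_injective F (hcols j) (by simpa [Units.smul_def] using h)))

theorem exists_units_smul_col_eq [Fintype ι] [Fintype m] [Fintype F]
    (hcard : Fintype.card ι * (Fintype.card F - 1) = Fintype.card F ^ Fintype.card m - 1)
    (y : m → F) (hy : y ≠ 0) : ∃ (j : ι) (c : Fˣ), c • Hᵀ j = y := by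
  classical
  let f : ι × Fˣ → {y : m → F // y ≠ 0} := fun p =>
    ⟨p.2 • Hᵀ p.1, (smul_ne_zero_iff_ne _).2 (hcols p.1)⟩
  have hf : Function.Bijective f := by
    refine (Fintype.bijective_iff_injective_and_card f).2 ⟨fun p p' h =>
      units_smul_transpose_injective H hcols hind (congrArg Subtype.val h), ?_⟩
    simp [Fintype.card_subtype_compl, Fintype.card_units, hcard]
  obtain ⟨⟨j, c⟩, hjc⟩ := hf.2 ⟨y, hy⟩
  exact ⟨j, c, congrArg Subtype.val hjc⟩

theorem exists_perm_mulVec_col_eq [Finite ι] [Fintype m] [DecidableEq m]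
    (hcover : ∀ y : m → F, y ≠ 0 → ∃ (j : ι) (c : Fˣ), c • Hᵀ j = y)
    {B : Matrix m m F} (hB : IsUnit B) :
    ∃ (σ : Equiv.Perm ι) (d : ι → Fˣ), ∀ k, B *ᵥ Hᵀ (σ k) = d k • Hᵀ k := by
  have hBinj := mulVec_injective_iff_isUnit.2 hB
  choose τ c hc using fun j =>
    hcover (B *ᵥ Hᵀ j) ((hBinj.ne_iff' (mulVec_zero B)).2 (hcols j))
  have hτ : Function.Injective τ := fun j₁ j₂ h => by
    by_contra hne
    refine hind j₁ j₂ hne ((c j₂ * (c j₁)⁻¹ : Fˣ) : F) (hBinj ?_)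
    rw [mulVec_smul, ← hc, ← hc, h, ← Units.smul_def, smul_smul, inv_mul_cancel_right]
  let e := Equiv.ofBijective τ (Finite.injective_iff_bijective.1 hτ)
  refine ⟨e.symm, fun k => c (e.symm k), fun k => ?_⟩
  rw [← hc]
  congr 2
  exact e.apply_symm_apply k

end Columns

section Automorphisms

variable {F K ι m : Type*} [Field F] [Field K] [Algebra F K]

def monomialAddAut (σ : Equiv.Perm ι) (d : ι → Kˣ) : AddAut (ι → K) :=
  ((LinearEquiv.funCongrLeft K K σ).trans
    (LinearEquiv.piCongrRight fun k => LinearEquiv.smulOfUnit (d k))).toAddEquiv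

theorem monomialAddAut_apply (σ : Equiv.Perm ι) (d : ι → Kˣ) (x : ι → K) (k : ι) :
    monomialAddAut σ d x k = d k * x (σ k) :=
  rfl

def coordinatewiseAddAut (g : K ≃ₗ[F] K) : AddAut (ι → K) :=
  (LinearEquiv.piCongrRight fun _ => g).toAddEquiv

theorem coordinatewiseAddAut_apply (g : K ≃ₗ[F] K) (x : ι → K) (k : ι) :
    coordinatewiseAddAut g x k = g (x k) :=
  rfl

variable [Fintype ι] (H : Matrix m ι F)

theorem map_mulVec_monomialAddAut [Fintype m] {B : Matrix m m F} {σ : Equiv.Perm ι}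
    {d : ι → Fˣ} (h : ∀ k, B *ᵥ Hᵀ (σ k) = d k • Hᵀ k) (x : ι → K) :
    H.map (algebraMap F K) *ᵥ monomialAddAut σ (fun k => Units.map (algebraMap F K) (d k)) x =
      B.map (algebraMap F K) *ᵥ (H.map (algebraMap F K) *ᵥ x) := by
  rw [mulVec_mulVec, ← Matrix.map_mul]
  ext i
  simp only [mulVec, dotProduct, map_apply, monomialAddAut_apply, Units.coe_map,
    MonoidHom.coe_coe]
  rw [← Equiv.sum_comp σ (fun j => algebraMap F K ((B * H) i j) * x j)]
  refine Finset.sum_congr rfl fun k _ => ?_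
  have hBH : (B * H) i (σ k) = d k * H i k := congrFun (h k) i
  rw [hBH, map_mul]
  ring

theorem map_mulVec_coordinatewiseAddAut (g : K ≃ₗ[F] K) (x : ι → K) :
    H.map (algebraMap F K) *ᵥ coordinatewiseAddAut g x = g ∘ (H.map (algebraMap F K) *ᵥ x) := by
  ext i
  simp [mulVec, dotProduct, coordinatewiseAddAut_apply, ← Algebra.smul_def]

end Automorphisms

theorem lifted_hamming_rq_completely_transitive_general {q m n : ℕ}
    (F K : Type) [Field F] [Fintype F]
    [Field K] [Fintype K] [DecidableEq K] [Algebra F K]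
    (hq : Fintype.card F = q)
    (H : Matrix (Fin m) (Fin n) F)
    (hcols : ∀ j, (fun i => H i j) ≠ 0)
    (hind : ∀ j₁ j₂, j₁ ≠ j₂ → ∀ c : F, (fun i => H i j₂) ≠ c • (fun i => H i j₁))
    (hn : n * (q - 1) = q ^ m - 1)
    (v w : Fin n → K)
    (hvw : distToCode {x : Fin n → K | (H.map (algebraMap F K)).mulVec x = 0} v =
           distToCode {x : Fin n → K | (H.map (algebraMap F K)).mulVec x = 0} w) :
    ∃ f ∈ AddSubgroup.closure {f : AddAut (Fin n → K) |
        (∀ x : Fin n → K, (H.map (algebraMap F K)).mulVec (f x) = 0 ↔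
          (H.map (algebraMap F K)).mulVec x = 0) ∧
        (IsMonomialMap f ∨ IsSemilinearMap F f)},
      (H.map (algebraMap F K)).mulVec (w - f v) = 0 := by
  have hcover := exists_units_smul_col_eq H hcols hind (by simpa [hq] using hn)
  rw [distToCode_eq_finrank H hcover, distToCode_eq_finrank H hcover] at hvw
  obtain ⟨B, hB, g, hBg⟩ := exists_isUnit_map_mulVec_comp_eq hvw
  obtain ⟨σ, d, hσ⟩ := exists_perm_mulVec_col_eq H hcols hind hcover hB
  have hBK : Function.Injective (B.map (algebraMap F K)).mulVec :=
    mulVec_injective_iff_isUnit.2 (hB.map (algebraMap F K).mapMatrix)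
  refine ⟨monomialAddAut σ (fun k => Units.map (algebraMap F K) (d k)) + coordinatewiseAddAut g,
    add_mem (AddSubgroup.subset_closure ⟨fun x => ?_, Or.inl ⟨σ, _, fun _ _ => rfl⟩⟩)
      (AddSubgroup.subset_closure ⟨fun x => ?_, Or.inr ⟨g, fun _ _ => rfl⟩⟩), ?_⟩
  · rw [map_mulVec_monomialAddAut H hσ]
    exact hBK.eq_iff' (mulVec_zero _)
  · rw [map_mulVec_coordinatewiseAddAut]
    exact g.injective.comp_left.eq_iff' (by ext; simp)
  · rw [mulVec_sub, AddAut.add_apply, map_mulVec_monomialAddAut H hσ,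
      map_mulVec_coordinatewiseAddAut, hBg, sub_self]

/-- The lifted Hamming code `C_{(m,r)}` is `(r,q)`-completely transitive:
any two vectors at the same distance from the code are related, modulo the code, by an
automorphism from the group generated by code-preserving monomial maps and
coordinatewise `F_q`-linear automorphisms. -/
theorem lifted_hamming_rq_completely_transitive {q m r n : ℕ} (hm : 1 ≤ m) (hr : 1 ≤ r)
    (F K : Type) [Field F] [Fintype F] [DecidableEq F]
    [Field K] [Fintype K] [DecidableEq K] [Algebra F K]
    (hq : Fintype.card F = q)
    (hrank : Module.finrank F K = r)
    (H : Matrix (Fin m) (Fin n) F)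
    (hcols : ∀ j, (fun i => H i j) ≠ 0)
    (hind : ∀ j₁ j₂, j₁ ≠ j₂ → ∀ c : F, (fun i => H i j₂) ≠ c • (fun i => H i j₁))
    (hn : n * (q - 1) = q ^ m - 1)
    (v w : Fin n → K)
    (hvw : distToCode {x : Fin n → K | (H.map (algebraMap F K)).mulVec x = 0} v =
           distToCode {x : Fin n → K | (H.map (algebraMap F K)).mulVec x = 0} w) :
    ∃ f ∈ AddSubgroup.closure {f : AddAut (Fin n → K) |
        (∀ x : Fin n → K, (H.map (algebraMap F K)).mulVec (f x) = 0 ↔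
          (H.map (algebraMap F K)).mulVec x = 0) ∧
        (IsMonomialMap f ∨ IsSemilinearMap F f)},
      (H.map (algebraMap F K)).mulVec (w - f v) = 0 :=
  lifted_hamming_rq_completely_transitive_general F K hq H hcols hind hn v w hvw
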